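/- For every integer p ≥ 3 and all β > β_0 ≥ log 2 with β_0 > β*(p), one has sup_{x ∈ η_p^{−1}((β,∞))} H_{β_0,p}(x) = sup_{x ∈ (m_*(β,p), 1]} H_{β_0,p}(x); that is, the Bahadur slopes of the maximum pseudolikelihood and maximum likelihood tests coincide whenever the null parameter is at least log 2. -/

import Mathlib

/-!
On `(0, 1)` one has `H_β'(t) = p t^{p-1} (β - η_p(t))`, so `η_p(m) = β` at the maximizer `m`,
and `η_p(t) ≥ β` on `(0, t)` forces `H_β(t) ≤ H_β(0) = 0`. The derivative of `η_p` has the sign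
of `ψ(t) = t / (1 - t²) - (p - 1) artanh t` (`etaDerivFactor`), which changes sign at most once,
from negative to positive. Since `β₀ > β*(p)` gives `H_β(m) > 0`, `ψ(m)` cannot be negative, so
`η_p > β` on `(m, 1)`. A point `t ∈ (0, m]` with `η_p(t) > β` lies on the decreasing branch of
`η_p`, hence `H_{β₀}(t) ≤ H_β(t) ≤ 0 ≤ β₀ - log 2 = H_{β₀}(1)`. Negative points reduce to `|t|`,
and `1` itself is a limit of points of `(m, 1)`.
-/

open Real Set Filter

/-- `I(x) = ½[(1+x)log(1+x) + (1−x)log(1−x)]` (with `Real.log 0 = 0`). -/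
noncomputable def bahI (x : ℝ) : ℝ :=
  ((1 + x) * Real.log (1 + x) + (1 - x) * Real.log (1 - x)) / 2

/-- `H_{β,p}(x) = β xᵖ − I(x)`. -/
noncomputable def bahH (β : ℝ) (p : ℕ) (x : ℝ) : ℝ := β * x ^ p - bahI x

/-- `β*(p) = sup {β ≥ 0 : sup_{x∈[−1,1]} H_{β,p}(x) = 0}`. -/
noncomputable def betaStar (p : ℕ) : ℝ :=
  sSup {β : ℝ | 0 ≤ β ∧ sSup (bahH β p '' Set.Icc (-1 : ℝ) 1) = 0}

/-- inverse hyperbolic tangent. -/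
noncomputable def arctanh (x : ℝ) : ℝ := Real.log ((1 + x) / (1 - x)) / 2

/-- `η_p(t) = p⁻¹ t^{1−p} arctanh t` for `t ≠ 0`, and `η_p(0) = 0`. -/
noncomputable def etaFn (p : ℕ) (t : ℝ) : ℝ :=
  if t = 0 then 0 else (p : ℝ)⁻¹ * t ^ (1 - (p : ℤ)) * arctanh t

open Topology

lemma arctanh_neg (x : ℝ) : arctanh (-x) = -arctanh x := by
  rw [arctanh, arctanh, show (1 + -x) / (1 - -x) = ((1 + x) / (1 - x))⁻¹ by rw [inv_div]; ring,
    Real.log_inv]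
  ring

lemma arctanh_eq_artanh {x : ℝ} (hx : x ∈ Icc (-1) 1) : arctanh x = artanh x := by
  rw [artanh_eq_half_log hx, arctanh]
  ring

lemma hasDerivAt_arctanh {x : ℝ} (h1 : -1 < x) (h2 : x < 1) :
    HasDerivAt arctanh (1 / (1 - x ^ 2)) x := by
  have hlog : arctanh =ᶠ[𝓝 x] fun y => (Real.log (1 + y) - Real.log (1 - y)) / 2 := by
    filter_upwards [Ioo_mem_nhds h1 h2] with y hy
    rw [arctanh, Real.log_div (by linarith [hy.1]) (by linarith [hy.2])]
  have d1 : HasDerivAt (fun y : ℝ => Real.log (1 + y)) (1 / (1 + x)) x := by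
    simpa using ((hasDerivAt_id' x).const_add 1).log (by linarith)
  have d2 : HasDerivAt (fun y : ℝ => Real.log (1 - y)) (-(1 / (1 - x))) x := by
    simpa [neg_div] using ((hasDerivAt_id' x).const_sub 1).log (by linarith)
  refine (((d1.sub d2).div_const 2).congr_of_eventuallyEq hlog).congr_deriv ?_
  rw [show (1 : ℝ) - x ^ 2 = (1 + x) * (1 - x) by ring]
  field_simp [show (1 : ℝ) + x ≠ 0 by linarith, show (1 : ℝ) - x ≠ 0 by linarith]
  ring

lemma continuous_bahI : Continuous bahI :=
  ((Real.continuous_mul_log.comp (continuous_const.add continuous_id)).add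
    (Real.continuous_mul_log.comp (continuous_const.sub continuous_id))).div_const 2

lemma bahI_neg (x : ℝ) : bahI (-x) = bahI x := by
  rw [bahI, bahI, sub_neg_eq_add, ← sub_eq_add_neg]
  ring

lemma bahI_zero : bahI 0 = 0 := by simp [bahI]

lemma hasDerivAt_bahI {x : ℝ} (h1 : -1 < x) (h2 : x < 1) :
    HasDerivAt bahI (arctanh x) x := by
  have d1 : HasDerivAt (fun y : ℝ => (1 + y) * Real.log (1 + y)) (Real.log (1 + x) + 1) x := by
    simpa [Function.comp_def] using
      (Real.hasDerivAt_mul_log (by linarith)).comp x ((hasDerivAt_id' x).const_add 1)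
  have d2 : HasDerivAt (fun y : ℝ => (1 - y) * Real.log (1 - y)) (-(Real.log (1 - x) + 1)) x := by
    simpa [mul_comm, Function.comp_def] using
      (Real.hasDerivAt_mul_log (by linarith)).comp x ((hasDerivAt_id' x).const_sub 1)
  refine ((d1.add d2).div_const 2).congr_deriv ?_
  rw [arctanh, Real.log_div (by linarith) (by linarith)]
  ring

lemma continuous_bahH (β : ℝ) (p : ℕ) : Continuous (bahH β p) :=
  (continuous_const.mul (continuous_pow p)).sub continuous_bahI

lemma hasDerivAt_bahH {β : ℝ} {p : ℕ} {x : ℝ} (h1 : -1 < x) (h2 : x < 1) :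
    HasDerivAt (bahH β p) (β * p * x ^ (p - 1) - arctanh x) x :=
  (((hasDerivAt_pow p x).const_mul β).sub (hasDerivAt_bahI h1 h2)).congr_deriv (by ring)

lemma bahH_one (β : ℝ) (p : ℕ) : bahH β p 1 = β - Real.log 2 := by
  norm_num [bahH, bahI]

lemma bahH_le_bahH_abs {β : ℝ} (hβ : 0 ≤ β) (p : ℕ) (x : ℝ) : bahH β p x ≤ bahH β p |x| := by
  have hI : bahI |x| = bahI x := by
    rcases abs_choice x with h | h <;> rw [h]
    exact bahI_neg x
  have hpow : x ^ p ≤ |x| ^ p := by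
    rw [← abs_pow]
    exact le_abs_self _
  rw [bahH, bahH, hI]
  gcongr

lemma bahH_le_bahH_of_le {β₀ β : ℝ} (h : β₀ ≤ β) (p : ℕ) {x : ℝ} (hx : 0 ≤ x) :
    bahH β₀ p x ≤ bahH β p x := by
  rw [bahH, bahH]
  gcongr

lemma etaFn_of_ne_zero (p : ℕ) {t : ℝ} (ht : t ≠ 0) :
    etaFn p t = (p : ℝ)⁻¹ * t ^ (1 - (p : ℤ)) * arctanh t :=
  if_neg ht

lemma mul_etaFn {p : ℕ} (hp : p ≠ 0) {t : ℝ} (ht : t ≠ 0) :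
    (p : ℝ) * t ^ (p - 1) * etaFn p t = arctanh t := by
  have hzpow : t ^ (p - 1) * t ^ (1 - (p : ℤ)) = 1 := by
    rw [← zpow_natCast, ← zpow_add₀ ht, Nat.cast_sub (Nat.one_le_iff_ne_zero.2 hp)]
    simp
  rw [etaFn_of_ne_zero p ht]
  field_simp
  linear_combination arctanh t * hzpow

lemma abs_etaFn_neg (p : ℕ) (t : ℝ) : |etaFn p (-t)| = |etaFn p t| := by
  rcases eq_or_ne t 0 with rfl | ht
  · simp
  rw [etaFn_of_ne_zero p ht, etaFn_of_ne_zero p (neg_ne_zero.2 ht), arctanh_neg]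
  simp only [abs_mul, abs_zpow, abs_neg]

lemma etaFn_nonneg (p : ℕ) {t : ℝ} (h0 : 0 ≤ t) (h1 : t ≤ 1) : 0 ≤ etaFn p t := by
  rcases eq_or_ne t 0 with rfl | ht
  · simp [etaFn]
  rw [etaFn_of_ne_zero p ht, arctanh_eq_artanh ⟨by linarith, h1⟩]
  have := artanh_nonneg h0
  positivity

lemma etaFn_le_etaFn_abs (p : ℕ) {t : ℝ} (ht : t ∈ Icc (-1) 1) : etaFn p t ≤ etaFn p |t| := by
  have h0 : 0 ≤ etaFn p |t| := etaFn_nonneg p (abs_nonneg t) (abs_le.2 ht)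
  rcases abs_choice t with h | h
  · rw [h]
  · calc etaFn p t ≤ |etaFn p t| := le_abs_self _
      _ = |etaFn p (-t)| := by rw [← abs_etaFn_neg]
      _ = etaFn p |t| := by rw [h, abs_of_nonneg (h ▸ h0)]

noncomputable def etaDerivFactor (p : ℕ) (t : ℝ) : ℝ := t / (1 - t ^ 2) - ((p : ℝ) - 1) * arctanh t

lemma etaDerivFactor_zero (p : ℕ) : etaDerivFactor p 0 = 0 := by
  simp [etaDerivFactor, arctanh]

lemma hasDerivAt_etaDerivFactor (p : ℕ) {t : ℝ} (h1 : -1 < t) (h2 : t < 1) :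
    HasDerivAt (etaDerivFactor p) ((2 - p + p * t ^ 2) / (1 - t ^ 2) ^ 2) t := by
  have ht : (1 : ℝ) - t ^ 2 ≠ 0 := by nlinarith
  have d1 : HasDerivAt (fun y : ℝ => y / (1 - y ^ 2))
      ((1 * (1 - t ^ 2) - t * (0 - 2 * t)) / (1 - t ^ 2) ^ 2) t :=
    (hasDerivAt_id' t).div ((hasDerivAt_const t 1).sub (by simpa using hasDerivAt_pow 2 t)) ht
  refine (d1.sub ((hasDerivAt_arctanh h1 h2).const_mul ((p : ℝ) - 1))).congr_deriv ?_
  field_simp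
  ring

lemma continuousOn_etaDerivFactor (p : ℕ) : ContinuousOn (etaDerivFactor p) (Ioo (-1) 1) :=
  fun _ hx => (hasDerivAt_etaDerivFactor p hx.1 hx.2).continuousAt.continuousWithinAt

lemma etaDerivFactor_strictMonoOn {p : ℕ} {ξ : ℝ} (hξ : 0 < ξ) (hnum : 0 ≤ 2 - p + p * ξ ^ 2) :
    StrictMonoOn (etaDerivFactor p) (Ico ξ 1) := by
  refine strictMonoOn_of_hasDerivWithinAt_pos (convex_Ico ξ 1)
    (f' := fun x => (2 - p + p * x ^ 2) / (1 - x ^ 2) ^ 2)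
    ((continuousOn_etaDerivFactor p).mono fun x hx => ⟨by linarith [hx.1], hx.2⟩)
    (fun x hx => ?_) (fun x hx => ?_)
  all_goals rw [interior_Ico] at hx
  · exact (hasDerivAt_etaDerivFactor p (by linarith [hx.1]) hx.2).hasDerivWithinAt
  · have hx2 : ξ ^ 2 < x ^ 2 := by nlinarith [hx.1]
    have : 0 < 2 - p + p * x ^ 2 := by
      rcases Nat.eq_zero_or_pos p with rfl | hp
      · norm_num
      · have : (p : ℝ) * ξ ^ 2 < p * x ^ 2 := by gcongr
        linarith
    have : 0 < 1 - x ^ 2 := by nlinarith [hx.1, hx.2]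
    positivity

lemma etaDerivFactor_pos_of_nonneg (p : ℕ) {u v : ℝ} (hu : 0 < u) (huv : u < v) (hv : v < 1)
    (h : 0 ≤ etaDerivFactor p u) : 0 < etaDerivFactor p v := by
  -- as `ψ(0) = 0 ≤ ψ(u)`, the derivative `ψ'` is nonnegative somewhere in `(0, u)`
  obtain ⟨ξ, hξ, hslope⟩ := exists_hasDerivAt_eq_slope (etaDerivFactor p) _ hu
    ((continuousOn_etaDerivFactor p).mono fun x hx => ⟨by linarith [hx.1], by linarith [hx.2]⟩)
    (fun x hx => hasDerivAt_etaDerivFactor p (by linarith [hx.1]) (by linarith [hx.2]))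
  have hnum : 0 ≤ 2 - p + p * ξ ^ 2 := by
    have : 0 ≤ (2 - p + p * ξ ^ 2) / (1 - ξ ^ 2) ^ 2 := by
      rw [hslope, etaDerivFactor_zero, sub_zero, sub_zero]
      positivity
    have hden : 0 < (1 - ξ ^ 2) ^ 2 := pow_pos (by nlinarith [hξ.1, hξ.2]) 2
    simpa using (le_div_iff₀ hden).1 this
  exact h.trans_lt (etaDerivFactor_strictMonoOn hξ.1 hnum ⟨hξ.2.le, huv.trans hv⟩
    ⟨(hξ.2.trans huv).le, hv⟩ huv)

lemma hasDerivAt_etaFn (p : ℕ) {t : ℝ} (h0 : 0 < t) (h1 : t < 1) :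
    HasDerivAt (etaFn p) ((p : ℝ)⁻¹ * (t ^ (-(p : ℤ)) * etaDerivFactor p t)) t := by
  have hev : etaFn p =ᶠ[𝓝 t] fun s => (p : ℝ)⁻¹ * s ^ (1 - (p : ℤ)) * arctanh s := by
    filter_upwards [lt_mem_nhds h0] with s hs using etaFn_of_ne_zero p hs.ne'
  have d := ((hasDerivAt_zpow (1 - (p : ℤ)) t (Or.inl h0.ne')).const_mul (p : ℝ)⁻¹).mul
    (hasDerivAt_arctanh (by linarith) h1)
  refine (d.congr_of_eventuallyEq hev).congr_deriv ?_
  have ht : (1 : ℝ) - t ^ 2 ≠ 0 := by nlinarith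
  rw [show (1 - (p : ℤ) - 1) = -p by ring, show 1 - (p : ℤ) = -p + 1 by ring,
    zpow_add_one₀ h0.ne', etaDerivFactor]
  push_cast
  field_simp
  ring

lemma etaFn_strictMonoOn {p : ℕ} (hp : p ≠ 0) {u : ℝ} (hu : 0 < u)
    (h : ∀ x ∈ Ioo u 1, 0 < etaDerivFactor p x) : StrictMonoOn (etaFn p) (Ico u 1) := by
  refine strictMonoOn_of_hasDerivWithinAt_pos (convex_Ico u 1)
    (f' := fun x => (p : ℝ)⁻¹ * (x ^ (-(p : ℤ)) * etaDerivFactor p x))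
    (fun x hx => (hasDerivAt_etaFn p (hu.trans_le hx.1) hx.2).continuousAt.continuousWithinAt)
    (fun x hx => ?_) (fun x hx => ?_)
  all_goals rw [interior_Ico] at hx
  · exact (hasDerivAt_etaFn p (hu.trans hx.1) hx.2).hasDerivWithinAt
  · have := h x hx
    have := hu.trans hx.1
    positivity

lemma etaFn_antitoneOn (p : ℕ) {t : ℝ} (ht : t < 1)
    (h : ∀ x ∈ Ioo 0 t, etaDerivFactor p x ≤ 0) : AntitoneOn (etaFn p) (Ioc 0 t) := by
  refine antitoneOn_of_hasDerivWithinAt_nonpos (convex_Ioc 0 t)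
    (f' := fun x => (p : ℝ)⁻¹ * (x ^ (-(p : ℤ)) * etaDerivFactor p x))
    (fun x hx => (hasDerivAt_etaFn p hx.1 (hx.2.trans_lt ht)).continuousAt.continuousWithinAt)
    (fun x hx => ?_) (fun x hx => ?_)
  all_goals rw [interior_Ioc] at hx
  · exact (hasDerivAt_etaFn p hx.1 (hx.2.trans ht)).hasDerivWithinAt
  · have := zpow_pos hx.1 (-(p : ℤ))
    exact mul_nonpos_of_nonneg_of_nonpos (by positivity)
      (mul_nonpos_of_nonneg_of_nonpos this.le (h x hx))

lemma hasDerivAt_bahH_of_ne_zero (β : ℝ) {p : ℕ} (hp : p ≠ 0) {x : ℝ} (h1 : -1 < x) (h2 : x < 1)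
    (hx : x ≠ 0) : HasDerivAt (bahH β p) (p * x ^ (p - 1) * (β - etaFn p x)) x :=
  (hasDerivAt_bahH h1 h2).congr_deriv (by rw [← mul_etaFn hp hx]; ring)

lemma etaFn_eq_of_isLocalMax {β : ℝ} {p : ℕ} (hp : p ≠ 0) {x : ℝ} (h1 : -1 < x) (h2 : x < 1)
    (hx : x ≠ 0) (hmax : IsLocalMax (bahH β p) x) : etaFn p x = β := by
  have := hmax.hasDerivAt_eq_zero (hasDerivAt_bahH_of_ne_zero β hp h1 h2 hx)
  have hpx : (p : ℝ) * x ^ (p - 1) ≠ 0 := by positivity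
  linarith [(mul_eq_zero.1 this).resolve_left hpx]

lemma bahH_nonpos_of_le_etaFn {β : ℝ} {p : ℕ} (hp : p ≠ 0) {t : ℝ} (ht0 : 0 ≤ t) (ht1 : t < 1)
    (h : ∀ x ∈ Ioo 0 t, β ≤ etaFn p x) : bahH β p t ≤ 0 := by
  have hanti : AntitoneOn (bahH β p) (Icc 0 t) := by
    refine antitoneOn_of_hasDerivWithinAt_nonpos (convex_Icc 0 t)
      (f' := fun x => p * x ^ (p - 1) * (β - etaFn p x))
      (continuous_bahH β p).continuousOn (fun x hx => ?_) (fun x hx => ?_)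
    all_goals rw [interior_Icc] at hx
    · exact (hasDerivAt_bahH_of_ne_zero β hp (by linarith [hx.1]) (hx.2.trans ht1)
        hx.1.ne').hasDerivWithinAt
    · have := hx.1
      exact mul_nonpos_of_nonneg_of_nonpos (by positivity) (by linarith [h x hx])
  have h0 : bahH β p 0 = 0 := by simp [bahH, bahI_zero, hp]
  simpa [h0] using hanti ⟨le_rfl, ht0⟩ ⟨ht0, le_rfl⟩ ht0

lemma bahH_nonpos_of_etaDerivFactor_nonpos {β : ℝ} {p : ℕ} (hp : p ≠ 0) {t : ℝ} (ht0 : 0 < t)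
    (ht1 : t < 1) (hψ : ∀ x ∈ Ioo 0 t, etaDerivFactor p x ≤ 0) (hβ : β ≤ etaFn p t) :
    bahH β p t ≤ 0 :=
  bahH_nonpos_of_le_etaFn hp ht0.le ht1 fun _ hx =>
    hβ.trans (etaFn_antitoneOn p ht1 hψ ⟨hx.1, hx.2.le⟩ ⟨ht0, le_rfl⟩ hx.2.le)

lemma not_isMaxOn_bahH_one {β : ℝ} (hβ : 0 ≤ β) (p : ℕ) : ¬IsMaxOn (bahH β p) (Icc (-1) 1) 1 := by
  intro hmax
  set a := max 0 (tanh (β * p))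
  have ha1 : a < 1 := max_lt one_pos (tanh_lt_one _)
  -- on `(a, 1)` the slope `arctanh x` of `I` exceeds `β p ≥ β p x^{p-1}`
  have hanti : StrictAntiOn (bahH β p) (Icc a 1) := by
    refine strictAntiOn_of_hasDerivWithinAt_neg (convex_Icc a 1)
      (f' := fun x => β * p * x ^ (p - 1) - arctanh x) (continuous_bahH β p).continuousOn
      (fun x hx => ?_) (fun x hx => ?_)
    all_goals rw [interior_Icc] at hx
    all_goals have hx0 : 0 < x := (le_max_left _ _).trans_lt hx.1
    · exact (hasDerivAt_bahH (by linarith) hx.2).hasDerivWithinAt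
    · have hartanh : β * p < arctanh x := by
        rw [arctanh_eq_artanh ⟨by linarith, hx.2.le⟩]
        calc β * p = artanh (tanh (β * p)) := (artanh_tanh _).symm
          _ < artanh x := artanh_lt_artanh (neg_one_lt_tanh _) hx.2
            ((le_max_right _ _).trans_lt hx.1)
      have : β * p * x ^ (p - 1) ≤ β * p :=
        mul_le_of_le_one_right (by positivity) (pow_le_one₀ hx0.le hx.2.le)
      linarith
  have ha0 : 0 ≤ a := le_max_left _ _
  exact (hanti ⟨le_rfl, ha1.le⟩ ⟨ha1.le, le_rfl⟩ ha1).not_ge (hmax ⟨by linarith, ha1.le⟩)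

lemma etaDerivFactor_nonneg_of_bahH_pos {β : ℝ} {p : ℕ} (hp : p ≠ 0) {m : ℝ} (hm0 : 0 < m)
    (hm1 : m < 1) (hβ : β ≤ etaFn p m) (hpos : 0 < bahH β p m) : 0 ≤ etaDerivFactor p m := by
  by_contra! hneg
  refine (bahH_nonpos_of_etaDerivFactor_nonpos hp hm0 hm1 (fun x hx => ?_) hβ).not_gt hpos
  by_contra! hx'
  exact hneg.not_ge (etaDerivFactor_pos_of_nonneg p hx.1 hx.2 hm1 hx'.le).le

lemma lt_etaFn_of_mem_Ioo {β : ℝ} {p : ℕ} (hp : p ≠ 0) {m : ℝ} (hm0 : 0 < m) (hm1 : m < 1)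
    (hβ : β ≤ etaFn p m) (hpos : 0 < bahH β p m) {x : ℝ} (hx : x ∈ Ioo m 1) :
    β < etaFn p x := by
  have hψ := etaDerivFactor_nonneg_of_bahH_pos hp hm0 hm1 hβ hpos
  have hmono := etaFn_strictMonoOn hp hm0 fun y hy =>
    etaDerivFactor_pos_of_nonneg p hm0 hy.1 hy.2 hψ
  exact hβ.trans_lt (hmono ⟨le_rfl, hm1⟩ ⟨hx.1.le, hx.2⟩ hx.1)

lemma bahH_nonpos_of_lt_etaFn {β : ℝ} {p : ℕ} (hp : p ≠ 0) {m : ℝ} (hm1 : m < 1)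
    (hβ : etaFn p m ≤ β) {t : ℝ} (ht0 : 0 < t) (htm : t ≤ m) (ht : β < etaFn p t) :
    bahH β p t ≤ 0 := by
  refine bahH_nonpos_of_etaDerivFactor_nonpos hp ht0 (htm.trans_lt hm1) (fun u hu => ?_) ht.le
  -- otherwise `η_p` would increase from `t` to `m`
  by_contra! hu'
  have hmono := etaFn_strictMonoOn hp hu.1 fun y hy =>
    etaDerivFactor_pos_of_nonneg p hu.1 hy.1 hy.2 hu'.le
  have := hmono.monotoneOn ⟨hu.2.le, htm.trans_lt hm1⟩ ⟨hu.2.le.trans htm, hm1⟩ htm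
  linarith

lemma exists_bahH_pos_of_betaStar_lt {β : ℝ} {p : ℕ} (hβ : 0 ≤ β) (h : betaStar p < β) :
    ∃ x ∈ Icc (-1 : ℝ) 1, 0 < bahH β p x := by
  have hbdd : ∀ γ, BddAbove (bahH γ p '' Icc (-1 : ℝ) 1) := fun γ =>
    (isCompact_Icc.image (continuous_bahH γ p)).bddAbove
  have hone : ∀ γ, γ - Real.log 2 ≤ sSup (bahH γ p '' Icc (-1 : ℝ) 1) := fun γ =>
    bahH_one γ p ▸ le_csSup (hbdd γ) ⟨1, ⟨by norm_num, le_rfl⟩, rfl⟩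
  have hne : sSup (bahH β p '' Icc (-1 : ℝ) 1) ≠ 0 := fun h0 =>
    h.not_ge (le_csSup ⟨Real.log 2, fun γ hγ => by linarith [hone γ, hγ.2]⟩ ⟨hβ, h0⟩)
  have hzero : 0 ≤ sSup (bahH β p '' Icc (-1 : ℝ) 1) :=
    le_csSup_of_le (hbdd β) ⟨0, ⟨by norm_num, by norm_num⟩, rfl⟩
      (by simp only [bahH, bahI_zero, sub_zero]; positivity)
  obtain ⟨_, ⟨x, hx, rfl⟩, hpos⟩ :=
    exists_lt_of_lt_csSup ((nonempty_Icc.2 (by norm_num)).image _) (hzero.lt_of_ne hne.symm)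
  exact ⟨x, hx, hpos⟩

lemma bahH_pos_of_isMaxOn {β₀ β : ℝ} {p : ℕ} (hβ₀ : 0 ≤ β₀) (h0 : betaStar p < β₀) (h1 : β₀ ≤ β)
    {m : ℝ} (hmax : IsMaxOn (bahH β p) (Icc (-1) 1) m) : 0 < bahH β p m := by
  obtain ⟨x, hx, hpos⟩ := exists_bahH_pos_of_betaStar_lt hβ₀ h0
  calc 0 < bahH β₀ p x := hpos
    _ ≤ bahH β₀ p |x| := bahH_le_bahH_abs hβ₀ p x
    _ ≤ bahH β p |x| := bahH_le_bahH_of_le h1 p (abs_nonneg x)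
    _ ≤ bahH β p m := hmax ⟨by linarith [abs_nonneg x], abs_le.2 hx⟩

lemma csSup_image_eq_of_Ioo_subset {f : ℝ → ℝ} (hf : Continuous f) {a b : ℝ} (hab : a < b)
    {A : Set ℝ} (hsub : Ioo a b ⊆ A) (hle : ∀ t ∈ A, f t ≤ sSup (f '' Ioc a b)) :
    sSup (f '' A) = sSup (f '' Ioc a b) := by
  have hne : (Ioo a b).Nonempty := nonempty_Ioo.2 hab
  have hbddA : BddAbove (f '' A) := ⟨_, forall_mem_image.2 hle⟩
  have hbdd : BddAbove (f '' Ioo a b) := hbddA.mono (image_mono hsub)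
  refine le_antisymm (csSup_le ((hne.mono hsub).image f) (forall_mem_image.2 hle)) ?_
  calc sSup (f '' Ioc a b) ≤ sSup (f '' Ioo a b) := by
        refine csSup_le ((nonempty_Ioc.2 hab).image f) (forall_mem_image.2 fun x hx => ?_)
        have hcl : x ∈ closure (Ioo a b) := by
          rw [closure_Ioo hab.ne]
          exact Ioc_subset_Icc_self hx
        exact closure_minimal (fun y hy => le_csSup hbdd hy) isClosed_Iic
          (map_mem_closure hf hcl (mapsTo_image f _))
    _ ≤ sSup (f '' A) := csSup_le_csSup hbddA (hne.image f) (image_mono hsub)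

/-- For `p ≥ 3` and `β > β₀ ≥ log 2` with `β₀ > β*(p)`, with `m = m_*(β,p)` the positive
global maximizer of `H_{β,p}` on `[−1,1]`:
`sup_{x ∈ η_p⁻¹((β,∞))} H_{β₀,p}(x) = sup_{x ∈ (m, 1]} H_{β₀,p}(x)`, i.e. the Bahadur
slopes of the MPL and ML tests coincide when the null parameter is at least `log 2`. -/
theorem statement9 (p : ℕ) (hp : 3 ≤ p) (β β₀ : ℝ) (h0 : betaStar p < β₀)
    (hlog : Real.log 2 ≤ β₀) (h1 : β₀ < β)
    (m : ℝ) (hm0 : 0 < m) (hm1 : m ∈ Set.Icc (-1 : ℝ) 1)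
    (hmax : IsMaxOn (bahH β p) (Set.Icc (-1 : ℝ) 1) m) :
    sSup (bahH β₀ p '' {t ∈ Set.Icc (-1 : ℝ) 1 | β < etaFn p t})
      = sSup (bahH β₀ p '' Set.Ioc m 1) := by
  have hp0 : p ≠ 0 := by omega
  have hβ₀ : 0 < β₀ := (Real.log_pos one_lt_two).trans_le hlog
  have hm1' : m < 1 :=
    hm1.2.lt_of_ne (by rintro rfl; exact not_isMaxOn_bahH_one (hβ₀.trans h1).le p hmax)
  have hηm : etaFn p m = β := etaFn_eq_of_isLocalMax hp0 (by linarith) hm1' hm0.ne'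
    (hmax.isLocalMax (Icc_mem_nhds (by linarith) hm1'))
  have hpos : 0 < bahH β p m := bahH_pos_of_isMaxOn hβ₀.le h0 h1.le hmax
  refine csSup_image_eq_of_Ioo_subset (continuous_bahH β₀ p) hm1'
    (fun x hx => ⟨⟨by linarith [hx.1], hx.2.le⟩, lt_etaFn_of_mem_Ioo hp0 hm0 hm1' hηm.ge hpos hx⟩)
    (fun t ⟨ht, hβt⟩ => ?_)
  have hbdd : BddAbove (bahH β₀ p '' Ioc m 1) :=
    (isCompact_Icc.image (continuous_bahH β₀ p)).bddAbove.mono (image_mono Ioc_subset_Icc_self)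
  have habs : 0 < |t| := abs_pos.2 (by rintro rfl; simp [etaFn] at hβt; linarith)
  have hβt' : β < etaFn p |t| := hβt.trans_le (etaFn_le_etaFn_abs p ht)
  refine (bahH_le_bahH_abs hβ₀.le p t).trans ?_
  rcases le_or_gt |t| m with htm | htm
  · calc bahH β₀ p |t| ≤ bahH β p |t| := bahH_le_bahH_of_le h1.le p habs.le
      _ ≤ 0 := bahH_nonpos_of_lt_etaFn hp0 hm1' hηm.le habs htm hβt'
      _ ≤ bahH β₀ p 1 := by rw [bahH_one]; linarith
      _ ≤ sSup (bahH β₀ p '' Ioc m 1) := le_csSup hbdd ⟨1, ⟨hm1', le_rfl⟩, rfl⟩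
  · exact le_csSup hbdd ⟨|t|, ⟨htm, abs_le.2 ht⟩, rfl⟩
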